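/- arXiv:0811.3103 — 3 statements merged into one kernel-verified Lean document; each statement's English description precedes it below -/
import Mathlib

section
/- Let G be a finite abelian group, c > 0, and f : G → ℂ a function with ‖f‖₂ ≤ 1 (where ‖f‖₂² = E_x |f(x)|²) and ‖f‖_{U²} ≥ c. Then there exists a character ψ of G such that |E_x f(x) conj(ψ(x))| ≥ c². -/
/-!
With `f̂ ψ = ∑ x, f x * conj (ψ x)` and `N = |G|`, the `U²` sum is `∑ a, |∑ x, f x * conj (f (x + a))|²`,
and the Fourier transform of this autocorrelation is `|f̂|²` (at `ψ⁻¹`). Plancherel therefore gives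
`‖f‖_{U²}⁴ = N⁻⁴ ∑ ψ, |f̂ ψ|⁴ ≤ N⁻⁴ max |f̂|² ∑ ψ, |f̂ ψ|² = N⁻³ max |f̂|² ∑ x, |f x|² ≤ (max |f̂| / N)²`,
so the character maximising `|f̂|` correlates with `f` by at least `c²`.
-/

open Finset ComplexConjugate

section
variable {G : Type*} [AddCommGroup G] [Fintype G]

noncomputable def fourierSum (f : G → ℂ) (ψ : AddChar G ℂ) : ℂ := ∑ x, f x * conj (ψ x)

theorem sum_fourierSum_mul_conj (g h : G → ℂ) :
    ∑ ψ : AddChar G ℂ, fourierSum g ψ * conj (fourierSum h ψ) =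
      Fintype.card G * ∑ x, g x * conj (h x) := by
  classical
  calc ∑ ψ : AddChar G ℂ, fourierSum g ψ * conj (fourierSum h ψ)
      = ∑ x, ∑ y, g x * conj (h y) * ∑ ψ : AddChar G ℂ, ψ (y - x) := by
        simp_rw [fourierSum, map_sum, map_mul, Complex.conj_conj, sum_mul_sum, mul_sum]
        rw [sum_comm]
        refine sum_congr rfl fun x _ => ?_
        rw [sum_comm]
        refine sum_congr rfl fun y _ => sum_congr rfl fun ψ _ => ?_
        rw [sub_eq_add_neg, AddChar.map_add_eq_mul, AddChar.map_neg_eq_conj]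
        ring
    _ = Fintype.card G * ∑ x, g x * conj (h x) := by
        simp [AddChar.sum_apply_eq_ite, sub_eq_zero, mul_sum, mul_comm]

theorem sum_norm_fourierSum_sq (f : G → ℂ) :
    ∑ ψ : AddChar G ℂ, ‖fourierSum f ψ‖ ^ 2 = Fintype.card G * ∑ x, ‖f x‖ ^ 2 := by
  have := sum_fourierSum_mul_conj f f
  simp only [Complex.mul_conj'] at this
  exact_mod_cast this

noncomputable def autocorr (f : G → ℂ) (a : G) : ℂ := ∑ x, f x * conj (f (x + a))

theorem fourierSum_autocorr (f : G → ℂ) (ψ : AddChar G ℂ) :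
    fourierSum (autocorr f) ψ = ‖fourierSum f ψ⁻¹‖ ^ 2 := by
  set F : G → ℂ := fun x => f x * ψ x
  have hF : fourierSum f ψ⁻¹ = ∑ x, F x := by
    simp [fourierSum, F, AddChar.map_neg_eq_conj]
  calc fourierSum (autocorr f) ψ = ∑ x, ∑ a, F x * conj (F (x + a)) := by
        simp only [fourierSum, autocorr, sum_mul]
        rw [sum_comm]
        refine sum_congr rfl fun x _ => sum_congr rfl fun a _ => ?_
        have hψ : ψ x * conj (ψ x) = 1 := by simp [Complex.mul_conj']
        simp only [F, map_mul, AddChar.map_add_eq_mul]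
        linear_combination (-(f x * conj (f (x + a)) * conj (ψ a))) * hψ
    _ = ‖fourierSum f ψ⁻¹‖ ^ 2 := by
        rw [← Complex.mul_conj', hF, map_sum, sum_mul_sum]
        exact sum_congr rfl fun x _ =>
          Equiv.sum_comp (Equiv.addLeft x) (fun y => F x * conj (F y))

theorem sum_u2_eq_sum_autocorr_mul_conj (f : G → ℂ) :
    ∑ x, ∑ a, ∑ b, f x * conj (f (x + a)) * conj (f (x + b)) * f (x + a + b) =
      ∑ a, autocorr f a * conj (autocorr f a) := by
  rw [sum_comm]
  refine sum_congr rfl fun a _ => ?_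
  simp only [autocorr, map_sum, map_mul, Complex.conj_conj, sum_mul_sum]
  refine sum_congr rfl fun x _ => ?_
  refine Eq.trans ?_ (Equiv.sum_comp (Equiv.addLeft x) _)
  refine sum_congr rfl fun b _ => ?_
  simp only [Equiv.coe_addLeft, add_right_comm x b a]
  ring

theorem card_mul_sum_u2 (f : G → ℂ) :
    Fintype.card G * ∑ x, ∑ a, ∑ b, f x * conj (f (x + a)) * conj (f (x + b)) * f (x + a + b) =
      ((∑ ψ : AddChar G ℂ, ‖fourierSum f ψ‖ ^ 4 : ℝ) : ℂ) := by
  rw [sum_u2_eq_sum_autocorr_mul_conj, ← sum_fourierSum_mul_conj]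
  simp only [fourierSum_autocorr, ← Complex.ofReal_pow, Complex.conj_ofReal]
  push_cast
  rw [← Equiv.sum_comp (Equiv.inv (AddChar G ℂ))]
  simp only [Equiv.inv_apply, inv_inv, ← pow_add]

theorem sum_u2_div_card_pow_three (f : G → ℂ) :
    (∑ x, ∑ a, ∑ b, f x * conj (f (x + a)) * conj (f (x + b)) * f (x + a + b)) /
        (Fintype.card G : ℂ) ^ 3 =
      ((∑ ψ : AddChar G ℂ, ‖fourierSum f ψ‖ ^ 4) / (Fintype.card G : ℝ) ^ 4 : ℝ) := by
  have hN : (Fintype.card G : ℂ) ≠ 0 := Nat.cast_ne_zero.2 Fintype.card_ne_zero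
  rw [Complex.ofReal_div, ← card_mul_sum_u2]
  push_cast
  field_simp

theorem exists_sum_pow_four_le {ι : Type*} [Fintype ι] [Nonempty ι] (u : ι → ℝ) :
    ∃ i, ∑ j, u j ^ 4 ≤ u i ^ 2 * ∑ j, u j ^ 2 := by
  obtain ⟨i, hi⟩ := Finite.exists_max fun j => u j ^ 2
  refine ⟨i, ?_⟩
  rw [mul_sum]
  gcongr with j
  calc u j ^ 4 = u j ^ 2 * u j ^ 2 := by ring
    _ ≤ u i ^ 2 * u j ^ 2 := mul_le_mul_of_nonneg_right (hi j) (sq_nonneg _)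

end

theorem u2_inverse_general
    {G : Type*} [AddCommGroup G] [Fintype G] (c : ℝ) (f : G → ℂ)
    (hl2 : (∑ x : G, ‖f x‖ ^ 2) / (Fintype.card G : ℝ) ≤ 1)
    (hu2 : c ^ 4 ≤ (((∑ x : G, ∑ a : G, ∑ b : G,
        f x * (starRingEnd ℂ) (f (x + a)) * (starRingEnd ℂ) (f (x + b)) * f (x + a + b)) /
      ((Fintype.card G : ℂ)) ^ 3).re)) :
    ∃ ψ : G → ℂ, (∀ x y : G, ψ (x + y) = ψ x * ψ y) ∧ (∀ x : G, ‖ψ x‖ = 1) ∧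
      c ^ 2 ≤ ‖(∑ x : G, f x * (starRingEnd ℂ) (ψ x)) / (Fintype.card G : ℂ)‖ := by
  have hN : (0 : ℝ) < Fintype.card G := Nat.cast_pos.2 Fintype.card_pos
  rw [sum_u2_div_card_pow_three, Complex.ofReal_re] at hu2
  obtain ⟨ψ, hψ⟩ := exists_sum_pow_four_le fun ψ : AddChar G ℂ => ‖fourierSum f ψ‖
  refine ⟨ψ, ψ.map_add_eq_mul, ψ.norm_apply, ?_⟩
  have hparseval : ∑ ψ : AddChar G ℂ, ‖fourierSum f ψ‖ ^ 2 ≤ (Fintype.card G : ℝ) ^ 2 := by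
    rw [sum_norm_fourierSum_sq, sq]
    gcongr
    exact (div_le_one hN).1 hl2
  have hcorr : (c ^ 2) ^ 2 ≤ (‖fourierSum f ψ‖ / Fintype.card G) ^ 2 := by
    calc (c ^ 2) ^ 2 ≤ (∑ ψ : AddChar G ℂ, ‖fourierSum f ψ‖ ^ 4) / (Fintype.card G : ℝ) ^ 4 := by
          rw [← pow_mul]; exact hu2
      _ ≤ ‖fourierSum f ψ‖ ^ 2 * (Fintype.card G : ℝ) ^ 2 / (Fintype.card G : ℝ) ^ 4 := by
          gcongr
          exact hψ.trans (by gcongr)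
      _ = (‖fourierSum f ψ‖ / Fintype.card G) ^ 2 := by field_simp
  rw [norm_div, Complex.norm_natCast]
  exact (pow_le_pow_iff_left₀ (sq_nonneg c) (by positivity) two_ne_zero).1 hcorr

/-- Inverse theorem for the `U²` norm: if `‖f‖₂ ≤ 1` and `‖f‖_{U²} ≥ c`, then `f` has
correlation at least `c²` with some character of `G`. -/
theorem u2_inverse
    {G : Type*} [AddCommGroup G] [Fintype G] (c : ℝ) (hc : 0 < c) (f : G → ℂ)
    (hl2 : (∑ x : G, ‖f x‖ ^ 2) / (Fintype.card G : ℝ) ≤ 1)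
    (hu2 : c ^ 4 ≤ (((∑ x : G, ∑ a : G, ∑ b : G,
        f x * (starRingEnd ℂ) (f (x + a)) * (starRingEnd ℂ) (f (x + b)) * f (x + a + b)) /
      ((Fintype.card G : ℂ)) ^ 3).re)) :
    ∃ ψ : G → ℂ, (∀ x y : G, ψ (x + y) = ψ x * ψ y) ∧ (∀ x : G, ‖ψ x‖ = 1) ∧
      c ^ 2 ≤ ‖(∑ x : G, f x * (starRingEnd ℂ) (ψ x)) / (Fintype.card G : ℂ)‖ :=
  u2_inverse_general c f hl2 hu2
end

section
/- Let ‖·‖ be any norm on ℝⁿ with dual norm ‖·‖*, and let f ∈ ℝⁿ. Then f can be written as g + h in such a way that ‖g‖ + ‖h‖* ≤ ‖f‖₂, where ‖·‖₂ is the Euclidean norm. -/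
open Finset Set

namespace DualDecomp

variable {n : ℕ}

noncomputable def ip (x y : Fin n → ℝ) : ℝ := ∑ j, x j * y j

theorem ip_zero_left (y : Fin n → ℝ) : ip 0 y = 0 := by simp [ip]
theorem ip_zero_right (x : Fin n → ℝ) : ip x 0 = 0 := by simp [ip]
theorem ip_add_right (u v w : Fin n → ℝ) : ip u (v + w) = ip u v + ip u w := by
  simp [ip, mul_add, Finset.sum_add_distrib]
theorem ip_smul_right (a : ℝ) (x y : Fin n → ℝ) : ip x (a • y) = a * ip x y := by
  rw [ip, ip, Finset.mul_sum]; exact Finset.sum_congr rfl fun j _ => by simp; ring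
theorem ip_smul_left (a : ℝ) (x y : Fin n → ℝ) : ip (a • x) y = a * ip x y := by
  rw [ip, ip, Finset.mul_sum]; exact Finset.sum_congr rfl fun j _ => by simp; ring
theorem ip_neg_left (x y : Fin n → ℝ) : ip (-x) y = - ip x y := by
  simp [ip, Finset.sum_neg_distrib]

section NormLike

variable (M : (Fin n → ℝ) → ℝ)
variable (h0 : ∀ x, 0 ≤ M x)
variable (hadd : ∀ x y, M (x + y) ≤ M x + M y)
variable (hsmul : ∀ (a : ℝ) (x), M (a • x) = |a| * M x)

include hsmul in
theorem M_zero : M 0 = 0 := by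
  have := hsmul 0 0
  simpa using this

include hsmul in
theorem M_neg (x : Fin n → ℝ) : M (-x) = M x := by
  have := hsmul (-1) x
  simpa using this

include hadd hsmul in
theorem M_abs_sub (x y : Fin n → ℝ) : |M x - M y| ≤ M (x - y) := by
  rw [abs_sub_le_iff]
  constructor
  · have := hadd y (x - y); simp at this; linarith
  · have := hadd x (y - x)
    simp at this
    have h2 : M (y - x) = M (x - y) := by
      rw [← M_neg M hsmul (x - y)]; simp
    linarith

include h0 hadd hsmul in
theorem M_sum {ι : Type*} (s : Finset ι) (v : ι → Fin n → ℝ) :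
    M (∑ i ∈ s, v i) ≤ ∑ i ∈ s, M (v i) := by
  classical
  induction s using Finset.cons_induction with
  | empty => simp [M_zero M hsmul]
  | cons i s hi ih =>
      rw [Finset.sum_cons, Finset.sum_cons]
      exact (hadd _ _).trans (by linarith)

include h0 hadd hsmul in
theorem M_upper : ∃ C : ℝ, 0 ≤ C ∧ ∀ x, M x ≤ C * ‖x‖ := by
  classical
  refine ⟨∑ j, M (Pi.single j 1), Finset.sum_nonneg fun j _ => h0 _, fun x => ?_⟩
  have hsingle : ∀ j : Fin n, (Pi.single j (x j) : Fin n → ℝ) = (x j) • (Pi.single j 1 : Fin n → ℝ) := by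
    intro j; funext k
    by_cases h : k = j <;> simp [Pi.single_apply, h]
  have hx : x = ∑ j, (Pi.single j (x j) : Fin n → ℝ) := (Finset.univ_sum_single x).symm
  calc M x = M (∑ j, (Pi.single j (x j) : Fin n → ℝ)) := by rw [← hx]
    _ ≤ ∑ j, M (Pi.single j (x j) : Fin n → ℝ) := M_sum M h0 hadd hsmul _ _
    _ = ∑ j, |x j| * M (Pi.single j 1) := by
        refine Finset.sum_congr rfl fun j _ => ?_
        rw [hsingle j, hsmul]
    _ ≤ ∑ j, ‖x‖ * M (Pi.single j 1) := by
        refine Finset.sum_le_sum fun j _ => ?_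
        exact mul_le_mul_of_nonneg_right (norm_le_pi_norm x j) (h0 _)
    _ = (∑ j, M (Pi.single j 1)) * ‖x‖ := by
        rw [Finset.sum_mul]; exact Finset.sum_congr rfl fun j _ => mul_comm _ _

include h0 hadd hsmul in
theorem M_continuous : Continuous M := by
  obtain ⟨C, hC0, hC⟩ := M_upper M h0 hadd hsmul
  have : LipschitzWith (Real.toNNReal C) M := by
    refine LipschitzWith.of_dist_le_mul fun x y => ?_
    rw [Real.dist_eq, dist_eq_norm]
    calc |M x - M y| ≤ M (x - y) := M_abs_sub M hadd hsmul x y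
      _ ≤ C * ‖x - y‖ := hC _
      _ = (Real.toNNReal C : ℝ) * ‖x - y‖ := by rw [Real.coe_toNNReal _ hC0]
  exact this.continuous

variable (hdef : ∀ x, M x = 0 → x = 0)

include h0 hadd hsmul hdef in
theorem M_lower (hn : n ≠ 0) : ∃ c : ℝ, 0 < c ∧ ∀ x, c * ‖x‖ ≤ M x := by
  have hne : (Metric.sphere (0 : Fin n → ℝ) 1).Nonempty := by
    refine ⟨Pi.single ⟨0, Nat.pos_of_ne_zero hn⟩ (1:ℝ), ?_⟩
    simp [Pi.norm_single]
  obtain ⟨x₀, hx₀, hmin⟩ := (isCompact_sphere (0 : Fin n → ℝ) 1).exists_isMinOn hne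
    (M_continuous M h0 hadd hsmul).continuousOn
  have hx₀n : ‖x₀‖ = 1 := by simpa using hx₀
  have hx₀0 : x₀ ≠ 0 := by
    intro h; rw [h] at hx₀n; simp at hx₀n
  have hc : 0 < M x₀ := by
    rcases lt_or_eq_of_le (h0 x₀) with h | h
    · exact h
    · exact absurd (hdef x₀ h.symm) hx₀0
  refine ⟨M x₀, hc, fun x => ?_⟩
  rcases eq_or_ne x 0 with rfl | hx
  · simp [M_zero M hsmul, h0]
  · have hxn : 0 < ‖x‖ := norm_pos_iff.2 hx
    have hmem : ‖x‖⁻¹ • x ∈ Metric.sphere (0 : Fin n → ℝ) 1 := by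
      simp [norm_smul, abs_of_pos (inv_pos.2 hxn), inv_mul_cancel₀ hxn.ne']
    have h1 : M x₀ ≤ M (‖x‖⁻¹ • x) := hmin hmem
    have h2 : M (‖x‖⁻¹ • x) = ‖x‖⁻¹ * M x := by
      rw [hsmul, abs_of_pos (inv_pos.2 hxn)]
    rw [h2] at h1
    calc M x₀ * ‖x‖ ≤ (‖x‖⁻¹ * M x) * ‖x‖ :=
          mul_le_mul_of_nonneg_right h1 hxn.le
      _ = M x := by field_simp

end NormLike

section Dual

noncomputable def dualN (M : (Fin n → ℝ) → ℝ) (v : Fin n → ℝ) : ℝ :=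
  sSup {t | ∃ u, M u ≤ 1 ∧ t = ip u v}

variable (M : (Fin n → ℝ) → ℝ)
variable (h0 : ∀ x, 0 ≤ M x)
variable (hadd : ∀ x y, M (x + y) ≤ M x + M y)
variable (hsmul : ∀ (a : ℝ) (x), M (a • x) = |a| * M x)
variable (hdef : ∀ x, M x = 0 → x = 0)
variable (hn : n ≠ 0)

include hsmul in
theorem dual_set_nonempty (v : Fin n → ℝ) :
    {t | ∃ u, M u ≤ 1 ∧ t = ip u v}.Nonempty :=
  ⟨0, 0, by simp [M_zero M hsmul], (ip_zero_left v).symm⟩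

include h0 hadd hsmul hdef hn in
theorem dual_set_bddAbove (v : Fin n → ℝ) :
    BddAbove {t | ∃ u, M u ≤ 1 ∧ t = ip u v} := by
  obtain ⟨c, hc, hlow⟩ := M_lower M h0 hadd hsmul hdef hn
  refine ⟨(n : ℝ) * c⁻¹ * ‖v‖, ?_⟩
  rintro t ⟨u, hu, rfl⟩
  have hun : ‖u‖ ≤ c⁻¹ := by
    have h1 : c * ‖u‖ ≤ 1 := (hlow u).trans hu
    have h2 : ‖u‖ ≤ 1 / c := (le_div_iff₀' hc).2 h1
    rwa [one_div] at h2
  calc ip u v ≤ |ip u v| := le_abs_self _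
    _ ≤ ∑ j, |u j * v j| := Finset.abs_sum_le_sum_abs _ _
    _ ≤ ∑ j : Fin n, c⁻¹ * ‖v‖ := by
        refine Finset.sum_le_sum fun j _ => ?_
        rw [abs_mul]
        have h1 : |u j| ≤ c⁻¹ := (norm_le_pi_norm u j).trans hun
        have h2 : |v j| ≤ ‖v‖ := norm_le_pi_norm v j
        exact mul_le_mul h1 h2 (abs_nonneg _) (inv_pos.2 hc).le
    _ = (n : ℝ) * c⁻¹ * ‖v‖ := by
        rw [Finset.sum_const]; simp [mul_assoc]

include h0 hadd hsmul hdef hn in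
theorem le_dualN {u v : Fin n → ℝ} (hu : M u ≤ 1) : ip u v ≤ dualN M v :=
  le_csSup (dual_set_bddAbove M h0 hadd hsmul hdef hn v) ⟨u, hu, rfl⟩

include hsmul in
theorem dualN_le {v : Fin n → ℝ} {B : ℝ} (hB : ∀ u, M u ≤ 1 → ip u v ≤ B) :
    dualN M v ≤ B :=
  csSup_le (dual_set_nonempty M hsmul v) (by rintro t ⟨u, hu, rfl⟩; exact hB u hu)

include h0 hadd hsmul hdef hn in
theorem dualN_nonneg (v : Fin n → ℝ) : 0 ≤ dualN M v := by
  have := le_dualN M h0 hadd hsmul hdef hn (v := v) (u := 0)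
    (by simp [M_zero M hsmul])
  rwa [ip_zero_left] at this

include h0 hdef in
theorem M_pos {x : Fin n → ℝ} (hx : x ≠ 0) : 0 < M x := by
  rcases lt_or_eq_of_le (h0 x) with h | h
  · exact h
  · exact absurd (hdef x h.symm) hx

include h0 hadd hsmul hdef hn in
theorem ip_le_M_mul_dualN (x v : Fin n → ℝ) : ip x v ≤ M x * dualN M v := by
  rcases eq_or_ne x 0 with rfl | hx
  · rw [ip_zero_left, M_zero M hsmul, zero_mul]
  · have hM : 0 < M x := M_pos M h0 hdef hx
    have hu : M ((M x)⁻¹ • x) ≤ 1 := by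
      rw [hsmul, abs_of_pos (inv_pos.2 hM), inv_mul_cancel₀ hM.ne']
    have := le_dualN M h0 hadd hsmul hdef hn (v := v) hu
    rw [ip_smul_left] at this
    calc ip x v = M x * ((M x)⁻¹ * ip x v) := by
          rw [← mul_assoc, mul_inv_cancel₀ hM.ne', one_mul]
      _ ≤ M x * dualN M v := mul_le_mul_of_nonneg_left this hM.le

include hsmul in
theorem dualN_zero : dualN M 0 = 0 := by
  apply le_antisymm
  · exact dualN_le M hsmul fun u _ => by rw [ip_zero_right]
  · have : (0:ℝ) ∈ {t | ∃ u, M u ≤ 1 ∧ t = ip u 0} :=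
      ⟨0, by simp [M_zero M hsmul], (ip_zero_right 0).symm⟩
    exact le_csSup ⟨0, by rintro t ⟨u, _, rfl⟩; rw [ip_zero_right]⟩ this

include h0 hadd hsmul hdef hn in
theorem dualN_add (v w : Fin n → ℝ) :
    dualN M (v + w) ≤ dualN M v + dualN M w := by
  refine dualN_le M hsmul fun u hu => ?_
  rw [ip_add_right]
  exact add_le_add (le_dualN M h0 hadd hsmul hdef hn hu)
    (le_dualN M h0 hadd hsmul hdef hn hu)

include h0 hadd hsmul hdef hn in
theorem dualN_smul_le (a : ℝ) (v : Fin n → ℝ) :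
    dualN M (a • v) ≤ |a| * dualN M v := by
  refine dualN_le M hsmul fun u hu => ?_
  rw [ip_smul_right]
  rcases le_or_gt 0 a with ha | ha
  · rw [abs_of_nonneg ha]
    exact mul_le_mul_of_nonneg_left (le_dualN M h0 hadd hsmul hdef hn hu) ha
  · have hnu : M (-u) ≤ 1 := by rw [M_neg M hsmul]; exact hu
    have h1 : ip (-u) v ≤ dualN M v := le_dualN M h0 hadd hsmul hdef hn hnu
    rw [ip_neg_left] at h1
    have : a * ip u v = |a| * (- ip u v) := by
      rw [abs_of_neg ha]; ring
    rw [this]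
    exact mul_le_mul_of_nonneg_left h1 (abs_nonneg a)

include h0 hadd hsmul hdef hn in
theorem dualN_smul (a : ℝ) (v : Fin n → ℝ) :
    dualN M (a • v) = |a| * dualN M v := by
  rcases eq_or_ne a 0 with rfl | ha
  · simp [dualN_zero M hsmul]
  · refine le_antisymm (dualN_smul_le M h0 hadd hsmul hdef hn a v) ?_
    have h1 : dualN M v ≤ |a|⁻¹ * dualN M (a • v) := by
      have := dualN_smul_le M h0 hadd hsmul hdef hn a⁻¹ (a • v)
      rwa [inv_smul_smul₀ ha, abs_inv] at this
    calc |a| * dualN M v ≤ |a| * (|a|⁻¹ * dualN M (a • v)) :=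
          mul_le_mul_of_nonneg_left h1 (abs_nonneg a)
      _ = dualN M (a • v) := by
          rw [← mul_assoc, mul_inv_cancel₀ (abs_ne_zero.2 ha), one_mul]

include h0 hadd hsmul hdef hn in
theorem dualN_def {v : Fin n → ℝ} (hv : dualN M v = 0) : v = 0 := by
  by_contra hv0
  have hM : 0 < M v := M_pos M h0 hdef hv0
  have hu : M ((M v)⁻¹ • v) ≤ 1 := by
    rw [hsmul, abs_of_pos (inv_pos.2 hM), inv_mul_cancel₀ hM.ne']
  have h1 := le_dualN M h0 hadd hsmul hdef hn (v := v) hu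
  rw [ip_smul_left, hv] at h1
  have hipv : 0 < ip v v := by
    obtain ⟨j, hj⟩ := Function.ne_iff.1 hv0
    refine Finset.sum_pos' (fun i _ => mul_self_nonneg _) ⟨j, Finset.mem_univ j, ?_⟩
    exact mul_self_pos.2 (by simpa using hj)
  have : 0 < (M v)⁻¹ * ip v v := mul_pos (inv_pos.2 hM) hipv
  linarith

end Dual

section Ball

variable (M : (Fin n → ℝ) → ℝ)
variable (h0 : ∀ x, 0 ≤ M x)
variable (hadd : ∀ x y, M (x + y) ≤ M x + M y)
variable (hsmul : ∀ (a : ℝ) (x), M (a • x) = |a| * M x)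
variable (hdef : ∀ x, M x = 0 → x = 0)
variable (hn : n ≠ 0)

include h0 hadd hsmul hdef hn in
theorem M_ball_compact : IsCompact {x : Fin n → ℝ | M x ≤ 1} := by
  obtain ⟨c, hc, hlow⟩ := M_lower M h0 hadd hsmul hdef hn
  have hclosed : IsClosed {x : Fin n → ℝ | M x ≤ 1} :=
    isClosed_Iic.preimage (M_continuous M h0 hadd hsmul)
  have hbdd : Bornology.IsBounded {x : Fin n → ℝ | M x ≤ 1} := by
    refine (Metric.isBounded_closedBall (x := (0 : Fin n → ℝ)) (r := c⁻¹)).subset ?_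
    intro x hx
    rw [Metric.mem_closedBall, dist_zero_right]
    have h1 : c * ‖x‖ ≤ 1 := (hlow x).trans hx
    have h2 : ‖x‖ ≤ 1 / c := (le_div_iff₀' hc).2 h1
    rwa [one_div] at h2
  exact Metric.isCompact_of_isClosed_isBounded hclosed hbdd

include hadd hsmul in
theorem M_ball_convex : Convex ℝ {x : Fin n → ℝ | M x ≤ 1} := by
  intro x hx y hy a b ha hb hab
  have h1 : M (a • x + b • y) ≤ a * M x + b * M y := by
    refine (hadd _ _).trans ?_
    rw [hsmul, hsmul, abs_of_nonneg ha, abs_of_nonneg hb]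
  have h2 : a * M x + b * M y ≤ a * 1 + b * 1 := by
    have := hx; have := hy
    gcongr
    · exact hx
    · exact hy
  simp only [Set.mem_setOf_eq]
  calc M (a • x + b • y) ≤ a * 1 + b * 1 := h1.trans h2
    _ = 1 := by rw [mul_one, mul_one, hab]

end Ball

end DualDecomp

open DualDecomp in
/-- Proposition 3.6: for any norm `‖·‖` on `ℝⁿ` and any `f`, one can write `f = g + h` with
`‖g‖ + ‖h‖* ≤ ‖f‖₂`, where `‖·‖*` is the dual norm and `‖·‖₂` the Euclidean norm. -/
theorem dual_decomposition
    {n : ℕ} (N : (Fin n → ℝ) → ℝ)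
    (hN0 : ∀ x, 0 ≤ N x) (hNdef : ∀ x, N x = 0 → x = 0)
    (hNadd : ∀ x y, N (x + y) ≤ N x + N y)
    (hNsmul : ∀ (a : ℝ) (x), N (a • x) = |a| * N x)
    (f : Fin n → ℝ) :
    ∃ g h : Fin n → ℝ, f = g + h ∧
      N g + sSup {t | ∃ u, N u ≤ 1 ∧ t = ∑ j, u j * h j}
        ≤ Real.sqrt (∑ j, f j ^ 2) := by
  classical
  by_cases hf0 : f = 0
  · refine ⟨0, 0, by simp [hf0], ?_⟩
    have hset : {t | ∃ u, N u ≤ 1 ∧ t = ∑ j, u j * (0 : Fin n → ℝ) j} = {0} := by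
      ext t
      simp only [Set.mem_setOf_eq, Set.mem_singleton_iff]
      constructor
      · rintro ⟨u, _, rfl⟩; simp
      · rintro rfl
        exact ⟨0, by rw [M_zero N hNsmul]; norm_num, by simp⟩
    rw [hset, csSup_singleton, M_zero N hNsmul]
    simpa using Real.sqrt_nonneg _
  · have hn : n ≠ 0 := by
      rintro rfl
      exact hf0 (Subsingleton.elim f 0)
    set D := dualN N with hD
    have hD0 : ∀ v, 0 ≤ D v := fun v => dualN_nonneg N hN0 hNadd hNsmul hNdef hn v
    have hDadd : ∀ v w, D (v + w) ≤ D v + D w := fun v w =>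
      dualN_add N hN0 hNadd hNsmul hNdef hn v w
    have hDsmul : ∀ (a : ℝ) (v), D (a • v) = |a| * D v := fun a v =>
      dualN_smul N hN0 hNadd hNsmul hNdef hn a v
    have hDdef : ∀ v, D v = 0 → v = 0 := fun v hv =>
      dualN_def N hN0 hNadd hNsmul hNdef hn hv
    set BN := {a : Fin n → ℝ | N a ≤ 1} with hBN
    set BD := {b : Fin n → ℝ | D b ≤ 1} with hBD
    have hBNc : IsCompact BN := M_ball_compact N hN0 hNadd hNsmul hNdef hn
    have hBDc : IsCompact BD := M_ball_compact D hD0 hDadd hDsmul hDdef hn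
    have hBNconv : Convex ℝ BN := M_ball_convex N hNadd hNsmul
    have hBDconv : Convex ℝ BD := M_ball_convex D hDadd hDsmul
    have h0BN : (0 : Fin n → ℝ) ∈ BN := by
      show N 0 ≤ 1; rw [M_zero N hNsmul]; norm_num
    have h0BD : (0 : Fin n → ℝ) ∈ BD := by
      show D 0 ≤ 1
      rw [hD, dualN_zero N hNsmul]
      norm_num
    set K := convexJoin ℝ BN BD with hK
    have hBNK : BN ⊆ K := fun a ha =>
      mem_convexJoin.2 ⟨a, ha, 0, h0BD, left_mem_segment ℝ a 0⟩
    have hBDK : BD ⊆ K := fun b hb =>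
      mem_convexJoin.2 ⟨0, h0BN, b, hb, right_mem_segment ℝ 0 b⟩
    have hKconv : Convex ℝ K := hBNconv.convexJoin hBDconv
    have hKimg : K = (fun p : ℝ × ((Fin n → ℝ) × (Fin n → ℝ)) =>
        (1 - p.1) • p.2.1 + p.1 • p.2.2) '' (Set.Icc (0:ℝ) 1 ×ˢ BN ×ˢ BD) := by
      ext x
      constructor
      · intro hx
        obtain ⟨a, ha, b, hb, hseg⟩ := mem_convexJoin.1 hx
        rw [segment_eq_image] at hseg
        obtain ⟨θ, hθ, hxθ⟩ := hseg
        exact ⟨(θ, a, b), ⟨hθ, ha, hb⟩, hxθ⟩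
      · rintro ⟨⟨θ, a, b⟩, ⟨hθ, ha, hb⟩, rfl⟩
        refine mem_convexJoin.2 ⟨a, ha, b, hb, ?_⟩
        rw [segment_eq_image]
        exact ⟨θ, hθ, rfl⟩
    have hKcomp : IsCompact K := by
      rw [hKimg]
      exact (isCompact_Icc.prod (hBNc.prod hBDc)).image (by fun_prop)
    have hsum_pos : 0 < ∑ j, f j ^ 2 := by
      obtain ⟨j, hj⟩ := Function.ne_iff.1 hf0
      refine Finset.sum_pos' (fun i _ => sq_nonneg _) ⟨j, Finset.mem_univ j, ?_⟩
      have hj' : f j ≠ 0 := by simpa using hj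
      exact lt_of_le_of_ne (sq_nonneg _) (Ne.symm (pow_ne_zero 2 hj'))
    set r := Real.sqrt (∑ j, f j ^ 2) with hr
    have hrpos : 0 < r := Real.sqrt_pos.2 hsum_pos
    have hCS : ∀ w : Fin n → ℝ, ip f w ≤ r * Real.sqrt (∑ j, w j ^ 2) := by
      intro w
      have h1 : (∑ j, f j * w j) ^ 2 ≤ (∑ j, f j ^ 2) * ∑ j, w j ^ 2 :=
        Finset.sum_mul_sq_le_sq_mul_sq _ _ _
      calc ip f w ≤ |∑ j, f j * w j| := le_abs_self _
        _ = Real.sqrt ((∑ j, f j * w j) ^ 2) := (Real.sqrt_sq_eq_abs _).symm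
        _ ≤ Real.sqrt ((∑ j, f j ^ 2) * ∑ j, w j ^ 2) := Real.sqrt_le_sqrt h1
        _ = r * Real.sqrt (∑ j, w j ^ 2) := Real.sqrt_mul hsum_pos.le _
    have hxK : r⁻¹ • f ∈ K := by
      by_contra hx
      obtain ⟨φ, u, hlt, hgt⟩ :=
        geometric_hahn_banach_closed_point hKconv hKcomp.isClosed hx
      set w : Fin n → ℝ := fun j => φ (Pi.single j 1) with hw
      have hφ : ∀ y : Fin n → ℝ, φ y = ip y w := by
        intro y
        have hy : y = ∑ j, Pi.single j (y j) := (Finset.univ_sum_single y).symm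
        rw [ip]
        conv_lhs => rw [hy]
        rw [map_sum]
        refine Finset.sum_congr rfl fun j _ => ?_
        have hsj : (Pi.single j (y j) : Fin n → ℝ) = y j • (Pi.single j 1 : Fin n → ℝ) := by
          funext k; by_cases h : k = j <;> simp [Pi.single_apply, h]
        rw [hsj, map_smul, smul_eq_mul]
      have hu0 : 0 < u := by
        have h0K : (0 : Fin n → ℝ) ∈ K := hBNK h0BN
        have := hlt 0 h0K
        simpa using this
      set w' : Fin n → ℝ := u⁻¹ • w with hw'
      have hKle : ∀ y ∈ K, ip y w' ≤ 1 := by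
        intro y hy
        have h1 : ip y w < u := by rw [← hφ]; exact hlt y hy
        have h2 : ip y w' = u⁻¹ * ip y w := ip_smul_right u⁻¹ y w
        rw [h2]
        calc u⁻¹ * ip y w ≤ u⁻¹ * u :=
              mul_le_mul_of_nonneg_left h1.le (inv_pos.2 hu0).le
          _ = 1 := inv_mul_cancel₀ hu0.ne'
      have hDw' : D w' ≤ 1 :=
        dualN_le N hNsmul fun a ha => hKle a (hBNK ha)
      have hDDw' : dualN D w' ≤ 1 :=
        dualN_le D hDsmul fun b hb => hKle b (hBDK hb)
      have hkey : ip w' w' ≤ D w' * dualN D w' :=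
        ip_le_M_mul_dualN D hD0 hDadd hDsmul hDdef hn w' w'
      have hDDnn : 0 ≤ dualN D w' := dualN_nonneg D hD0 hDadd hDsmul hDdef hn w'
      have hip1 : ip w' w' ≤ 1 := by nlinarith [hD0 w']
      have hsq : ∑ j, w' j ^ 2 ≤ 1 := by
        have hips : ip w' w' = ∑ j, w' j ^ 2 := by
          simp [ip, sq]
        linarith [hips ▸ hip1]
      have hle1 : ip (r⁻¹ • f) w' ≤ 1 := by
        rw [ip_smul_left]
        have h3 : Real.sqrt (∑ j, w' j ^ 2) ≤ 1 := by
          rw [show (1:ℝ) = Real.sqrt 1 by simp]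
          exact Real.sqrt_le_sqrt hsq
        have h4 : ip f w' ≤ r := by
          have := hCS w'
          nlinarith
        calc r⁻¹ * ip f w' ≤ r⁻¹ * r :=
              mul_le_mul_of_nonneg_left h4 (inv_pos.2 hrpos).le
          _ = 1 := inv_mul_cancel₀ hrpos.ne'
      have hgt1 : 1 < ip (r⁻¹ • f) w' := by
        have h1 : u < ip (r⁻¹ • f) w := by rw [← hφ]; exact hgt
        have h2 : ip (r⁻¹ • f) w' = u⁻¹ * ip (r⁻¹ • f) w := ip_smul_right u⁻¹ _ w
        rw [h2]
        calc 1 = u⁻¹ * u := (inv_mul_cancel₀ hu0.ne').symm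
          _ < u⁻¹ * ip (r⁻¹ • f) w := by
              exact mul_lt_mul_of_pos_left h1 (inv_pos.2 hu0)
      linarith
    obtain ⟨a, haBN, b, hbBD, hseg⟩ := mem_convexJoin.1 hxK
    obtain ⟨p, q, hp, hq, hpq, hx⟩ := hseg
    refine ⟨(r * p) • a, (r * q) • b, ?_, ?_⟩
    · have h1 : f = r • (r⁻¹ • f) := (smul_inv_smul₀ hrpos.ne' f).symm
      rw [h1, ← hx, smul_add, smul_smul, smul_smul]
    · have hNg : N ((r * p) • a) ≤ r * p := by
        rw [hNsmul, abs_of_nonneg (by positivity)]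
        calc (r * p) * N a ≤ (r * p) * 1 :=
              mul_le_mul_of_nonneg_left haBN (by positivity)
          _ = r * p := mul_one _
      have hDh : sSup {t | ∃ u, N u ≤ 1 ∧ t = ∑ j, u j * ((r * q) • b) j} ≤ r * q := by
        show dualN N ((r * q) • b) ≤ r * q
        refine dualN_le N hNsmul fun u hu => ?_
        rw [ip_smul_right]
        have h1 : ip u b ≤ D b := le_dualN N hN0 hNadd hNsmul hNdef hn hu
        calc (r * q) * ip u b ≤ (r * q) * 1 := by
              refine mul_le_mul_of_nonneg_left (h1.trans hbBD) (by positivity)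
          _ = r * q := mul_one _
      have hsum : r * p + r * q = r := by rw [← mul_add, hpq, mul_one]
      linarith
end

section
/- Let ν be a non-negative function on a finite set X that can be written as ν = ν₁ + ν₂ with ‖ν₁‖_∞ ≤ α and ‖ν₂‖₂ ≤ γ. Then every function h with 0 ≤ h ≤ ν pointwise satisfies ‖h‖₂ ≤ γ + (α‖h‖₁)^{1/2}. -/
/-!
Pointwise `h² ≤ h ν = h ν₁ + h ν₂ ≤ α |h| + h ν₂`; averaging and Cauchy–Schwarz give
`‖h‖₂² ≤ α ‖h‖₁ + γ ‖h‖₂`, and this quadratic inequality for `‖h‖₂` solves to the claim.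
-/

open Finset

lemma le_add_sqrt_of_sq_le_add_mul {t a γ : ℝ} (hγ : 0 ≤ γ) (h : t ^ 2 ≤ a + t * γ) :
    t ≤ γ + √a := by
  rcases le_or_gt t γ with htγ | hγt
  · exact htγ.trans (le_add_of_nonneg_right (Real.sqrt_nonneg a))
  · have hsq : (t - γ) ^ 2 ≤ a := by nlinarith
    have : t - γ ≤ √a := Real.le_sqrt_of_sq_le hsq
    linarith

lemma sum_mul_div_le_sqrt_mul_sqrt {ι : Type*} (s : Finset ι) (f g : ι → ℝ) {c : ℝ}
    (hc : 0 ≤ c) :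
    (∑ i ∈ s, f i * g i) / c ≤ √((∑ i ∈ s, f i ^ 2) / c) * √((∑ i ∈ s, g i ^ 2) / c) := by
  have hf : 0 ≤ ∑ i ∈ s, f i ^ 2 := sum_nonneg fun _ _ ↦ sq_nonneg _
  rw [← Real.sqrt_mul (div_nonneg hf hc), div_mul_div_comm, Real.sqrt_div' _ (mul_nonneg hc hc),
    Real.sqrt_mul_self hc, Real.sqrt_mul hf]
  exact div_le_div_of_nonneg_right (Real.sum_mul_le_sqrt_mul_sqrt s f g) hc

lemma sum_sq_le_mul_sum_abs_add_sum_mul {ι : Type*} (s : Finset ι) {h ν₁ ν₂ : ι → ℝ} {α : ℝ}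
    (hν₁ : ∀ i ∈ s, |ν₁ i| ≤ α) (hh : ∀ i ∈ s, 0 ≤ h i ∧ h i ≤ ν₁ i + ν₂ i) :
    ∑ i ∈ s, h i ^ 2 ≤ α * ∑ i ∈ s, |h i| + ∑ i ∈ s, h i * ν₂ i := by
  rw [mul_sum, ← sum_add_distrib]
  refine sum_le_sum fun i hi ↦ ?_
  obtain ⟨h0, hle⟩ := hh i hi
  have hν₁h : h i * ν₁ i ≤ α * |h i| := by
    rw [abs_of_nonneg h0, mul_comm α]
    exact mul_le_mul_of_nonneg_left (le_of_abs_le (hν₁ i hi)) h0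
  nlinarith

theorem l2_bound_of_dominated_by_split_measure_general
    {X : Type*} [Fintype X] (ν ν₁ ν₂ h : X → ℝ) (α γ : ℝ)
    (hsplit : ∀ x, ν x = ν₁ x + ν₂ x)
    (hν₁ : ∀ x, |ν₁ x| ≤ α)
    (hν₂ : Real.sqrt ((∑ x : X, ν₂ x ^ 2) / (Fintype.card X : ℝ)) ≤ γ)
    (hh : ∀ x, 0 ≤ h x ∧ h x ≤ ν x) :
    Real.sqrt ((∑ x : X, h x ^ 2) / (Fintype.card X : ℝ))
      ≤ γ + Real.sqrt (α * ((∑ x : X, |h x|) / (Fintype.card X : ℝ))) := by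
  set N : ℝ := (Fintype.card X : ℝ)
  set t := √((∑ x, h x ^ 2) / N)
  have hN : 0 ≤ N := Nat.cast_nonneg _
  have hsum : ∑ x, h x ^ 2 ≤ α * ∑ x, |h x| + ∑ x, h x * ν₂ x :=
    sum_sq_le_mul_sum_abs_add_sum_mul univ (fun x _ ↦ hν₁ x)
      fun x _ ↦ hsplit x ▸ hh x
  refine le_add_sqrt_of_sq_le_add_mul ((Real.sqrt_nonneg _).trans hν₂) ?_
  calc t ^ 2 = (∑ x, h x ^ 2) / N := Real.sq_sqrt (by positivity)
    _ ≤ α * ((∑ x, |h x|) / N) + (∑ x, h x * ν₂ x) / N := by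
      rw [← mul_div_assoc, ← add_div]; exact div_le_div_of_nonneg_right hsum hN
    _ ≤ α * ((∑ x, |h x|) / N) + t * γ := by
      gcongr
      exact (sum_mul_div_le_sqrt_mul_sqrt univ h ν₂ hN).trans
        (mul_le_mul_of_nonneg_left hν₂ (Real.sqrt_nonneg _))

/-- Lemma 5.5: if `ν = ν₁ + ν₂` is non-negative with `‖ν₁‖_∞ ≤ α` and `‖ν₂‖₂ ≤ γ`, then
every `h` with `0 ≤ h ≤ ν` satisfies `‖h‖₂ ≤ γ + (α‖h‖₁)^{1/2}` (norms with respect to the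
averaging measure). -/
theorem l2_bound_of_dominated_by_split_measure
    {X : Type*} [Fintype X] (ν ν₁ ν₂ h : X → ℝ) (α γ : ℝ)
    (hα : 0 ≤ α) (hγ : 0 ≤ γ)
    (hν : ∀ x, 0 ≤ ν x) (hsplit : ∀ x, ν x = ν₁ x + ν₂ x)
    (hν₁ : ∀ x, |ν₁ x| ≤ α)
    (hν₂ : Real.sqrt ((∑ x : X, ν₂ x ^ 2) / (Fintype.card X : ℝ)) ≤ γ)
    (hh : ∀ x, 0 ≤ h x ∧ h x ≤ ν x) :
    Real.sqrt ((∑ x : X, h x ^ 2) / (Fintype.card X : ℝ))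
      ≤ γ + Real.sqrt (α * ((∑ x : X, |h x|) / (Fintype.card X : ℝ))) :=
  l2_bound_of_dominated_by_split_measure_general ν ν₁ ν₂ h α γ hsplit hν₁ hν₂ hh
end
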